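/- Let H₁, H₂ be finite-dimensional real inner product spaces with inner products a₁ on H₁ and a₂ on H₂, and let C : H₁ → H₂ be a linear map (the discrete curl). Consider the backward Euler scheme: given E⁰ ∈ H₁, B⁰ ∈ H₂, τ > 0, define for each m: a₁((E^{m+1} − E^m)/τ, w) + σ a₁(E^{m+1}, w) − a₂(B^{m+1}, C w) = a₁(J^{m+1}, w) for all w ∈ H₁, and a₂((B^{m+1} − B^m)/τ, ψ) + a₂(ψ, C E^{m+1}) = 0 for all ψ ∈ H₂, where σ ≥ 0. Then this system has a unique solution (E^{m+1}, B^{m+1}) for every m. -/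

import Mathlib

/-!
Written as a single linear equation `L p = r` on `H₁ × H₂`, the step reads
`L (e, b) = ((τ⁻¹ + σ) • e - Cᵀ b, τ⁻¹ • b + C e)`. Pairing `L (e, b)` with `(e, b)`, the
off-diagonal terms `-⟪b, C e⟫` and `⟪C e, b⟫` cancel, leaving
`(τ⁻¹ + σ) ‖e‖² + τ⁻¹ ‖b‖²`; so `L` is injective, hence bijective in finite dimension.
-/

open RealInnerProductSpace

theorem forall_inner_eq_iff {E : Type*} [NormedAddCommGroup E] [InnerProductSpace ℝ E]
    (x y : E) : (∀ v, ⟪x, v⟫ = ⟪y, v⟫) ↔ x = y :=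
  ⟨ext_inner_right ℝ, fun h _ => h ▸ rfl⟩

section

variable {H₁ H₂ : Type*}
  [NormedAddCommGroup H₁] [InnerProductSpace ℝ H₁] [FiniteDimensional ℝ H₁]
  [NormedAddCommGroup H₂] [InnerProductSpace ℝ H₂] [FiniteDimensional ℝ H₂]

noncomputable def skewCoupledOp (C : H₁ →ₗ[ℝ] H₂) (α β : ℝ) : H₁ × H₂ →ₗ[ℝ] H₁ × H₂ :=
  (α • LinearMap.fst ℝ H₁ H₂ - LinearMap.adjoint C ∘ₗ LinearMap.snd ℝ H₁ H₂).prod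
    (β • LinearMap.snd ℝ H₁ H₂ + C ∘ₗ LinearMap.fst ℝ H₁ H₂)

@[simp]
theorem skewCoupledOp_apply (C : H₁ →ₗ[ℝ] H₂) (α β : ℝ) (p : H₁ × H₂) :
    skewCoupledOp C α β p = (α • p.1 - LinearMap.adjoint C p.2, β • p.2 + C p.1) :=
  rfl

theorem inner_skewCoupledOp_self (C : H₁ →ₗ[ℝ] H₂) (α β : ℝ) (p : H₁ × H₂) :
    ⟪(skewCoupledOp C α β p).1, p.1⟫ + ⟪(skewCoupledOp C α β p).2, p.2⟫ =
      α * ⟪p.1, p.1⟫ + β * ⟪p.2, p.2⟫ := by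
  simp only [skewCoupledOp_apply, inner_sub_left, inner_add_left, real_inner_smul_left,
    LinearMap.adjoint_inner_left, real_inner_comm (C p.1)]
  ring

theorem skewCoupledOp_bijective (C : H₁ →ₗ[ℝ] H₂) {α β : ℝ} (hα : 0 < α) (hβ : 0 < β) :
    Function.Bijective (skewCoupledOp C α β) := by
  have hinj : Function.Injective (skewCoupledOp C α β) := by
    rw [← LinearMap.ker_eq_bot, LinearMap.ker_eq_bot']
    intro p hp
    have hcoercive := inner_skewCoupledOp_self C α β p
    simp only [hp, Prod.fst_zero, Prod.snd_zero, inner_zero_left, add_zero] at hcoercive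
    have h₁ : 0 ≤ ⟪p.1, p.1⟫ := real_inner_self_nonneg
    have h₂ : 0 ≤ ⟪p.2, p.2⟫ := real_inner_self_nonneg
    have he : ⟪p.1, p.1⟫ = 0 := by nlinarith
    have hb : ⟪p.2, p.2⟫ = 0 := by nlinarith
    exact Prod.ext (inner_self_eq_zero.mp he) (inner_self_eq_zero.mp hb)
  exact ⟨hinj, LinearMap.injective_iff_surjective.mp hinj⟩

end

/-- Existence and uniqueness of the backward Euler step of the fully-discrete scheme on
finite-dimensional inner product spaces `H₁` (edge) and `H₂` (face), with discrete curl
`C`, conductivity `σ ≥ 0` and time step `τ > 0`. -/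
theorem stmt_11 {H₁ H₂ : Type*}
    [NormedAddCommGroup H₁] [InnerProductSpace ℝ H₁] [FiniteDimensional ℝ H₁]
    [NormedAddCommGroup H₂] [InnerProductSpace ℝ H₂] [FiniteDimensional ℝ H₂]
    (C : H₁ →ₗ[ℝ] H₂) (σ τ : ℝ) (hσ : 0 ≤ σ) (hτ : 0 < τ)
    (E : H₁) (B : H₂) (J : H₁) :
    ∃! p : H₁ × H₂,
      (∀ w : H₁, ⟪τ⁻¹ • (p.1 - E), w⟫ + σ * ⟪p.1, w⟫ - ⟪p.2, C w⟫ = ⟪J, w⟫) ∧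
      (∀ ψ : H₂, ⟪τ⁻¹ • (p.2 - B), ψ⟫ + ⟪ψ, C p.1⟫ = 0) := by
  have hscheme : ∀ p : H₁ × H₂,
      ((∀ w : H₁, ⟪τ⁻¹ • (p.1 - E), w⟫ + σ * ⟪p.1, w⟫ - ⟪p.2, C w⟫ = ⟪J, w⟫) ∧
        (∀ ψ : H₂, ⟪τ⁻¹ • (p.2 - B), ψ⟫ + ⟪ψ, C p.1⟫ = 0)) ↔
      skewCoupledOp C (τ⁻¹ + σ) τ⁻¹ p = (τ⁻¹ • E + J, τ⁻¹ • B) := by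
    intro p
    rw [skewCoupledOp_apply, Prod.ext_iff, ← forall_inner_eq_iff, ← forall_inner_eq_iff]
    refine and_congr (forall_congr' fun w => ?_) (forall_congr' fun ψ => ?_)
    · simp only [inner_sub_left, inner_add_left, real_inner_smul_left,
        LinearMap.adjoint_inner_left]
      constructor <;> intro h <;> linarith
    · simp only [inner_sub_left, inner_add_left, real_inner_smul_left, real_inner_comm (C p.1)]
      constructor <;> intro h <;> linarith
  simpa only [hscheme] using
    (skewCoupledOp_bijective C (by positivity) (inv_pos.mpr hτ)).existsUnique _
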